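/- For every m ≥ 1 and every ε > 0 there exists δ > 0 such that for every normal matrix α ∈ M_m(ℂ) with ‖α‖ = 1 and every g ∈ GL_m(ℂ), if the matrix β = g·α·g⁻¹ satisfies ‖ββᴴ − βᴴβ‖ < δ, then ‖β‖² − 1 < ε, where ‖·‖ is the Frobenius norm. -/

import Mathlib

open Matrix

/-- The Frobenius norm of a complex `m × m` matrix. -/
noncomputable def frobNorm {m : ℕ} (A : Matrix (Fin m) (Fin m) ℂ) : ℝ :=
  Real.sqrt (∑ i, ∑ j, ‖A i j‖ ^ 2)

/-!
By Schur's theorem `β` is unitarily conjugate to an upper triangular `T`, and unitary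
conjugation preserves the Frobenius norms of `β` and of `ββᴴ - βᴴβ`. The diagonal of `T` lists
the eigenvalues of `β`, which are those of `α`, so `∑ |Tᵢᵢ|² ≤ ‖α‖² = 1` (Schur's inequality).
The `i`-th diagonal entry of `TTᴴ - TᴴT` is `rᵢ - cᵢ`, the squared norm of row `i` minus that of
column `i`; weighting `|Tₐᵦ|²` by `b - a ≥ 1` above the diagonal gives
`∑_{a<b} |Tₐᵦ|² ≤ ∑ᵢ i (cᵢ - rᵢ) ≤ m ∑ᵢ |rᵢ - cᵢ|`.
Altogether `‖β‖² ≤ 1 + m² ‖ββᴴ - βᴴβ‖`.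
-/

open Module LinearMap InnerProductSpace

section

variable {𝕜 E : Type*} [RCLike 𝕜] [NormedAddCommGroup E] [InnerProductSpace 𝕜 E]

theorem Orthonormal.snoc {n : ℕ} {f : Fin n → E} (hf : Orthonormal 𝕜 f) {v : E} (hv : ‖v‖ = 1)
    (hfv : ∀ i, ⟪v, f i⟫_𝕜 = 0) : Orthonormal 𝕜 (Fin.snoc f v : Fin (n + 1) → E) := by
  rw [orthonormal_iff_ite] at hf ⊢
  intro i j
  induction i using Fin.lastCases <;> induction j using Fin.lastCases <;>
    simp [hf, hfv, inner_self_eq_norm_sq_to_K, hv, Fin.castSucc_ne_last,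
      (Fin.castSucc_ne_last _).symm, fun i => inner_eq_zero_symm.mp (hfv i)]

theorem LinearMap.mapsTo_orthogonal_span_singleton_of_adjoint_apply_eq_smul
    [FiniteDimensional 𝕜 E] (T : E →ₗ[𝕜] E) {μ : 𝕜} {v : E} (hv : adjoint T v = μ • v) :
    ∀ x ∈ (𝕜 ∙ v)ᗮ, T x ∈ (𝕜 ∙ v)ᗮ := by
  intro x hx
  rw [Submodule.mem_orthogonal_singleton_iff_inner_right] at hx ⊢
  rw [← adjoint_inner_left, hv, inner_smul_left, hx, mul_zero]

end

/- An eigenvector of `adjoint T` has a `T`-invariant orthogonal complement: triangularize `T` there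
and append the (normalized) eigenvector as the last basis vector. -/
theorem LinearMap.exists_orthonormalBasis_isUpperTriangular {E : Type*} [NormedAddCommGroup E]
    [InnerProductSpace ℂ E] [FiniteDimensional ℂ E] {n : ℕ} (hn : finrank ℂ E = n)
    (T : E →ₗ[ℂ] E) :
    ∃ b : OrthonormalBasis (Fin n) ℂ E, (toMatrixOrthonormal b T).IsUpperTriangular := by
  induction n generalizing E with
  | zero => exact ⟨(stdOrthonormalBasis ℂ E).reindex (finCongr hn), fun i => i.elim0⟩
  | succ n ih =>
    have : Nontrivial E := Module.nontrivial_of_finrank_eq_succ hn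
    have : Fact (finrank ℂ E = n + 1) := ⟨hn⟩
    obtain ⟨μ, hμ⟩ := Module.End.exists_eigenvalue (adjoint T)
    obtain ⟨v, hv⟩ := hμ.exists_hasEigenvector
    set u := (‖v‖⁻¹ : ℂ) • v
    have hu : ‖u‖ = 1 := norm_smul_inv_norm hv.2
    have hTu : adjoint T u = μ • u := by rw [map_smul, hv.apply_eq_smul, smul_comm]
    have hTK := T.mapsTo_orthogonal_span_singleton_of_adjoint_apply_eq_smul hTu
    have hK : finrank ℂ (ℂ ∙ u)ᗮ = n :=
      Submodule.finrank_orthogonal_span_singleton (norm_ne_zero_iff.mp (hu ▸ one_ne_zero))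
    obtain ⟨b, hb⟩ := ih hK (T.restrict hTK)
    have hon : Orthonormal ℂ (Fin.snoc (fun i => (b i : E)) u : Fin (n + 1) → E) :=
      (b.orthonormal.comp_linearIsometry (ℂ ∙ u)ᗮ.subtypeₗᵢ).snoc hu fun i =>
        Submodule.mem_orthogonal_singleton_iff_inner_right.mp (b i).2
    refine ⟨OrthonormalBasis.mk hon
      (hon.linearIndependent.span_eq_top_of_card_eq_finrank' (by simp [hn])).ge, ?_⟩
    intro i j hji
    simp only [toMatrixOrthonormal_apply_apply, OrthonormalBasis.coe_mk]
    induction i using Fin.lastCases with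
    | last =>
      obtain ⟨j, rfl⟩ := Fin.exists_castSucc_eq.mpr (Fin.ne_last_of_lt hji)
      simpa using Submodule.mem_orthogonal_singleton_iff_inner_right.mp (hTK _ (b j).2)
    | cast i =>
      obtain ⟨j, rfl⟩ :=
        Fin.exists_castSucc_eq.mpr (Fin.ne_last_of_lt (hji.trans (Fin.castSucc_lt_last i)))
      simpa [toMatrixOrthonormal_apply_apply] using hb (Fin.castSucc_lt_castSucc_iff.mp hji)

theorem Matrix.toMatrixOrthonormal_toEuclideanLin {n : ℕ}
    (b : OrthonormalBasis (Fin n) ℂ (EuclideanSpace ℂ (Fin n))) (A : Matrix (Fin n) (Fin n) ℂ) :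
    toMatrixOrthonormal b (toEuclideanLin A) =
      star ((EuclideanSpace.basisFun (Fin n) ℂ).toBasis.toMatrix b) * A *
        (EuclideanSpace.basisFun (Fin n) ℂ).toBasis.toMatrix b := by
  ext i j
  simp only [toMatrixOrthonormal_apply_apply, PiLp.inner_apply, ofLp_toLpLin, toLin'_apply, mulVec,
    dotProduct, RCLike.inner_apply, Finset.sum_mul, mul_apply, star_apply, Basis.toMatrix_apply,
    OrthonormalBasis.coe_toBasis_repr_apply, EuclideanSpace.basisFun_repr, RCLike.star_def]
  rw [Finset.sum_comm]
  exact Finset.sum_congr rfl fun _ _ => Finset.sum_congr rfl fun _ _ => by ring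

theorem Matrix.exists_unitary_isUpperTriangular {n : ℕ} (A : Matrix (Fin n) (Fin n) ℂ) :
    ∃ U : unitaryGroup (Fin n) ℂ, (Unitary.conjStarAlgAut ℂ _ U A).IsUpperTriangular := by
  obtain ⟨b, hb⟩ :=
    (toEuclideanLin A).exists_orthonormalBasis_isUpperTriangular finrank_euclideanSpace_fin
  refine ⟨star ⟨_, (EuclideanSpace.basisFun (Fin n) ℂ).toMatrix_orthonormalBasis_mem_unitary b⟩,
    ?_⟩
  rwa [Unitary.conjStarAlgAut_star_apply, ← toMatrixOrthonormal_toEuclideanLin]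

theorem Matrix.conjTranspose_mul_self_apply_self {m n : Type*} [Fintype m] (A : Matrix m n ℂ)
    (j : n) :
    (Aᴴ * A) j j = ((∑ i, ‖A i j‖ ^ 2 : ℝ) : ℂ) := by
  simp [mul_apply, Complex.conj_mul']

theorem Matrix.mul_conjTranspose_self_apply_self {m n : Type*} [Fintype n] (A : Matrix m n ℂ)
    (i : m) :
    (A * Aᴴ) i i = ((∑ j, ‖A i j‖ ^ 2 : ℝ) : ℂ) := by
  simp [mul_apply, Complex.mul_conj']

section

variable {n : ℕ}

theorem frobNorm_sq (A : Matrix (Fin n) (Fin n) ℂ) : frobNorm A ^ 2 = ∑ i, ∑ j, ‖A i j‖ ^ 2 :=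
  Real.sq_sqrt (by positivity)

theorem norm_apply_le_frobNorm (A : Matrix (Fin n) (Fin n) ℂ) (i j : Fin n) :
    ‖A i j‖ ≤ frobNorm A :=
  Real.le_sqrt_of_sq_le <|
    (Finset.single_le_sum (fun j _ => sq_nonneg ‖A i j‖) (Finset.mem_univ j)).trans
      (Finset.single_le_sum (f := fun i => ∑ j, ‖A i j‖ ^ 2) (fun _ _ => by positivity)
        (Finset.mem_univ i))

theorem frobNorm_eq_sqrt_re_trace (A : Matrix (Fin n) (Fin n) ℂ) :
    frobNorm A = √(Aᴴ * A).trace.re := by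
  rw [frobNorm, Matrix.trace, Complex.re_sum, Finset.sum_comm]
  simp only [diag_apply, conjTranspose_mul_self_apply_self, Complex.ofReal_re]

theorem frobNorm_conjStarAlgAut (U : unitaryGroup (Fin n) ℂ) (A : Matrix (Fin n) (Fin n) ℂ) :
    frobNorm (Unitary.conjStarAlgAut ℂ _ U A) = frobNorm A := by
  rw [frobNorm_eq_sqrt_re_trace, frobNorm_eq_sqrt_re_trace, ← star_eq_conjTranspose, ← map_star,
    ← map_mul, Unitary.conjStarAlgAut_apply, Matrix.trace_mul_cycle, Unitary.coe_star_mul_self,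
    one_mul, star_eq_conjTranspose]

theorem Matrix.charpoly_conjStarAlgAut {ι R : Type*} [Fintype ι] [DecidableEq ι] [CommRing R]
    [StarRing R] (U : unitaryGroup ι R) (A : Matrix ι ι R) :
    (Unitary.conjStarAlgAut R _ U A).charpoly = A.charpoly := by
  rw [Unitary.conjStarAlgAut_apply, charpoly_mul_comm, ← mul_assoc, Unitary.coe_star_mul_self,
    one_mul]

theorem Matrix.IsUpperTriangular.sum_sq_norm_diag_eq {ι : Type*} [Fintype ι] [LinearOrder ι]
    {T : Matrix ι ι ℂ} (hT : T.IsUpperTriangular) :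
    ∑ i, ‖T i i‖ ^ 2 = (T.charpoly.roots.map (‖·‖ ^ 2)).sum := by
  have hroots : T.charpoly.roots = Finset.univ.val.map fun i => T i i := by
    rw [charpoly_of_isUpperTriangular T hT, ← Polynomial.roots_multiset_prod_X_sub_C
      (Finset.univ.val.map fun i => T i i), Multiset.map_map]
    rfl
  rw [hroots, Multiset.map_map]
  rfl

theorem Matrix.IsUpperTriangular.sum_sq_norm_le {T : Matrix (Fin n) (Fin n) ℂ}
    (hT : T.IsUpperTriangular) :
    ∑ i, ∑ j, ‖T i j‖ ^ 2 ≤ ∑ i, ‖T i i‖ ^ 2 + n * ∑ i, ‖(T * Tᴴ - Tᴴ * T) i i‖ := by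
  set w : Fin n → Fin n → ℝ := fun a b => ‖T a b‖ ^ 2
  have hdiag (i : Fin n) : ‖(T * Tᴴ - Tᴴ * T) i i‖ = |∑ j, w i j - ∑ j, w j i| := by
    rw [sub_apply, mul_conjTranspose_self_apply_self, conjTranspose_mul_self_apply_self,
      ← Complex.ofReal_sub, Complex.norm_real, Real.norm_eq_abs]
  have hpoint (a b : Fin n) : w a b ≤ (if a = b then w a b else 0) + ((b : ℝ) - a) * w a b := by
    rcases lt_trichotomy a b with hab | rfl | hba
    · have : (a : ℝ) + 1 ≤ b := by exact_mod_cast (hab : (a : ℕ) < b)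
      rw [if_neg hab.ne, zero_add]
      exact le_mul_of_one_le_left (by positivity) (by linarith)
    · simp
    · simp [w, hT hba]
  have hweight :
      ∑ a : Fin n, ∑ b : Fin n, ((b : ℝ) - a) * w a b =
        ∑ i : Fin n, (i : ℝ) * (∑ j, w j i - ∑ j, w i j) := by
    simp only [sub_mul, mul_sub, Finset.sum_sub_distrib, Finset.mul_sum]
    rw [Finset.sum_comm (f := fun (a b : Fin n) => (b : ℝ) * w a b)]
  have hbound (i : Fin n) :
      (i : ℝ) * (∑ j, w j i - ∑ j, w i j) ≤ n * |∑ j, w i j - ∑ j, w j i| :=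
    calc (i : ℝ) * (∑ j, w j i - ∑ j, w i j)
        = (i : ℝ) * -(∑ j, w i j - ∑ j, w j i) := by rw [neg_sub]
      _ ≤ (i : ℝ) * |∑ j, w i j - ∑ j, w j i| := by gcongr; exact neg_le_abs _
      _ ≤ n * |∑ j, w i j - ∑ j, w j i| := by gcongr; exact_mod_cast i.is_lt.le
  calc ∑ i, ∑ j, ‖T i j‖ ^ 2
      ≤ ∑ a : Fin n, ∑ b : Fin n, ((if a = b then w a b else 0) + ((b : ℝ) - a) * w a b) :=
        Finset.sum_le_sum fun a _ => Finset.sum_le_sum fun b _ => hpoint a b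
    _ = ∑ i, ‖T i i‖ ^ 2 + ∑ i : Fin n, (i : ℝ) * (∑ j, w j i - ∑ j, w i j) := by
        simp only [Finset.sum_add_distrib, Finset.sum_ite_eq, Finset.mem_univ, if_true, hweight]
        rfl
    _ ≤ ∑ i, ‖T i i‖ ^ 2 + n * ∑ i, ‖(T * Tᴴ - Tᴴ * T) i i‖ := by
        simp only [hdiag, Finset.mul_sum]
        exact add_le_add_right (Finset.sum_le_sum fun i _ => hbound i) _

theorem sum_sq_norm_roots_charpoly_le_frobNorm_sq (A : Matrix (Fin n) (Fin n) ℂ) :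
    (A.charpoly.roots.map (‖·‖ ^ 2)).sum ≤ frobNorm A ^ 2 := by
  obtain ⟨U, hU⟩ := A.exists_unitary_isUpperTriangular
  set T := Unitary.conjStarAlgAut ℂ _ U A
  calc (A.charpoly.roots.map (‖·‖ ^ 2)).sum
      = ∑ i, ‖T i i‖ ^ 2 := by rw [hU.sum_sq_norm_diag_eq, charpoly_conjStarAlgAut]
    _ ≤ ∑ i, ∑ j, ‖T i j‖ ^ 2 :=
        Finset.sum_le_sum fun i _ =>
          Finset.single_le_sum (fun j _ => sq_nonneg ‖T i j‖) (Finset.mem_univ i)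
    _ = frobNorm A ^ 2 := by rw [← frobNorm_sq, frobNorm_conjStarAlgAut]

theorem frobNorm_sq_le_sum_sq_norm_roots_charpoly_add (A : Matrix (Fin n) (Fin n) ℂ) :
    frobNorm A ^ 2 ≤
      (A.charpoly.roots.map (‖·‖ ^ 2)).sum + n ^ 2 * frobNorm (A * Aᴴ - Aᴴ * A) := by
  obtain ⟨U, hU⟩ := A.exists_unitary_isUpperTriangular
  set T := Unitary.conjStarAlgAut ℂ _ U A
  have hcomm : frobNorm (T * Tᴴ - Tᴴ * T) = frobNorm (A * Aᴴ - Aᴴ * A) := by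
    simp only [T, ← star_eq_conjTranspose, ← map_star, ← map_mul, ← map_sub,
      frobNorm_conjStarAlgAut]
  calc frobNorm A ^ 2
      = ∑ i, ∑ j, ‖T i j‖ ^ 2 := by rw [← frobNorm_sq, frobNorm_conjStarAlgAut]
    _ ≤ ∑ i, ‖T i i‖ ^ 2 + n * ∑ i, ‖(T * Tᴴ - Tᴴ * T) i i‖ := hU.sum_sq_norm_le
    _ ≤ ∑ i, ‖T i i‖ ^ 2 + n * ∑ _i : Fin n, frobNorm (T * Tᴴ - Tᴴ * T) := by
        gcongr with i
        exact norm_apply_le_frobNorm _ i i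
    _ = (A.charpoly.roots.map (‖·‖ ^ 2)).sum + n ^ 2 * frobNorm (A * Aᴴ - Aᴴ * A) := by
        rw [hU.sum_sq_norm_diag_eq, charpoly_conjStarAlgAut, hcomm, Finset.sum_const,
          Finset.card_univ, Fintype.card_fin, nsmul_eq_mul]
        ring

end

/-- Lemma 8.3 in the adjoint model: for every `ε > 0` there is `δ > 0` such
that for every normal matrix `α` of Frobenius norm `1` and every `g ∈ GL_m(ℂ)`,
if `β = g α g⁻¹` satisfies `‖β βᴴ - βᴴ β‖ < δ`, then `‖β‖² - 1 < ε`. -/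
theorem stmt_4 (m : ℕ) (hm : 1 ≤ m) :
    ∀ ε : ℝ, 0 < ε → ∃ δ : ℝ, 0 < δ ∧
      ∀ α : Matrix (Fin m) (Fin m) ℂ, α * αᴴ = αᴴ * α → frobNorm α = 1 →
      ∀ g : (Matrix (Fin m) (Fin m) ℂ)ˣ,
      ∀ β : Matrix (Fin m) (Fin m) ℂ,
        β = (g : Matrix (Fin m) (Fin m) ℂ) * α * (↑g⁻¹ : Matrix (Fin m) (Fin m) ℂ) →
        frobNorm (β * βᴴ - βᴴ * β) < δ →
        frobNorm β ^ 2 - 1 < ε := by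
  intro ε hε
  have hm2 : (0 : ℝ) < (m : ℝ) ^ 2 := pow_pos (Nat.cast_pos.mpr hm) 2
  refine ⟨ε / m ^ 2, div_pos hε hm2, ?_⟩
  rintro α - hα g β hβ hδ
  have heig : (β.charpoly.roots.map (‖·‖ ^ 2)).sum ≤ 1 := by
    rw [hβ, charpoly_mul_comm, ← mul_assoc, Units.inv_mul, one_mul]
    simpa [hα] using sum_sq_norm_roots_charpoly_le_frobNorm_sq α
  have := frobNorm_sq_le_sum_sq_norm_roots_charpoly_add β
  rw [lt_div_iff₀' hm2] at hδ
  linarith
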